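/- arXiv:nlin/0610074 — 5 statements merged into one kernel-verified Lean document; each statement's English description precedes it below -/
import Mathlib

section
/- For the chain t_{1x} = t_x + β sinh t + β cosh t_1 (β a constant), the function I = (β²/2)cosh²t − β t_x cosh t + t_x²/2 + β t_x sinh t − t_{xx} satisfies D I = I − β²/2; consequently F = I + (β²/2)n satisfies D F = F, i.e. F is an n-integral. -/
/-- for the chain `t_{1x} = t_x + β sinh t + β cosh t₁`, the
function `I = (β²/2)cosh²t - β t_x cosh t + t_x²/2 + β t_x sinh t - t_{xx}`
satisfies `D I = I - β²/2`, and consequently `F = I + (β²/2) n` satisfies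
`D F = F`.  The shift `D` sends `t ↦ t₁`, `t_x ↦ t_{1x}` and
`t_{xx} ↦ D_x t_{1x} = t_{xx} + β t_x cosh t + β t_{1x} sinh t₁`. -/
theorem stmt_9 (β : ℝ) (n : ℕ) (t t1 tx txx : ℝ) :
    let t1x := tx + β * Real.sinh t + β * Real.cosh t1
    let t1xx := txx + β * tx * Real.cosh t + β * t1x * Real.sinh t1
    let I : ℝ → ℝ → ℝ → ℝ := fun u ux uxx =>
      β ^ 2 / 2 * (Real.cosh u) ^ 2 - β * ux * Real.cosh u + ux ^ 2 / 2
        + β * ux * Real.sinh u - uxx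
    I t1 t1x t1xx = I t tx txx - β ^ 2 / 2 ∧
    I t1 t1x t1xx + β ^ 2 / 2 * ((n : ℝ) + 1)
      = I t tx txx + β ^ 2 / 2 * (n : ℝ) := by
  intro t1x t1xx I
  have h1 : (Real.cosh t1)^2 - (Real.sinh t1)^2 = 1 := by
    have := Real.cosh_sq_sub_sinh_sq t1; nlinarith [this]
  have h2 : (Real.cosh t)^2 - (Real.sinh t)^2 = 1 := by
    have := Real.cosh_sq_sub_sinh_sq t; nlinarith [this]
  have key : I t1 t1x t1xx = I t tx txx - β ^ 2 / 2 := by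
    simp only [I, t1x, t1xx]; nlinarith [h1, h2, sq_nonneg β]
  exact ⟨key, by rw [key]; ring⟩
end

section
/- For the semi-discrete Liouville chain t_{1x} = t_x + e^t + e^{t_1}, the function I = e^{2t}/2 + t_x²/2 − t_{xx} is an n-integral: D I = I. -/
/-- for the semi-discrete Liouville chain
`t_{1x} = t_x + e^t + e^{t₁}`, the function
`I = e^{2t}/2 + t_x²/2 - t_{xx}` is an `n`-integral: `D I = I`.
The shift `D` sends `t ↦ t₁`, `t_x ↦ t_{1x}` and
`t_{xx} ↦ D_x t_{1x} = t_{xx} + t_x e^t + t_{1x} e^{t₁}`. -/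
theorem stmt_10 (t t1 tx txx : ℝ) :
    let t1x := tx + Real.exp t + Real.exp t1
    let t1xx := txx + tx * Real.exp t + t1x * Real.exp t1
    let I : ℝ → ℝ → ℝ → ℝ := fun u ux uxx =>
      Real.exp (2 * u) / 2 + ux ^ 2 / 2 - uxx
    I t1 t1x t1xx = I t tx txx := by
  simp only [two_mul, Real.exp_add]
  ring
end

section
/- For the semi-discrete Liouville chain t_{1x} = t_x + e^t + e^{t_1}, the function F = e^{t_1 − t} + e^{2t_1 − t_2 − t} + e^{t_1 − t_2} is an x-integral: D_x F = 0. -/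
/-- for the semi-discrete Liouville chain
`t_{1x} = t_x + e^t + e^{t₁}`, the function
`F = e^{t₁-t} + e^{2t₁-t₂-t} + e^{t₁-t₂}` is an `x`-integral:
`D_x F = F_{t₂} t_{2x} + F_{t₁} t_{1x} + F_t t_x = 0`, where
`t_{1x} = t_x + e^t + e^{t₁}` and `t_{2x} = t_x + e^t + 2e^{t₁} + e^{t₂}`. -/
theorem stmt_11 (t t1 t2 tx : ℝ) :
    let F : ℝ → ℝ → ℝ → ℝ := fun u u1 u2 =>
      Real.exp (u1 - u) + Real.exp (2 * u1 - u2 - u) + Real.exp (u1 - u2)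
    let t1x := tx + Real.exp t + Real.exp t1
    let t2x := tx + Real.exp t + 2 * Real.exp t1 + Real.exp t2
    deriv (fun s => F t t1 s) t2 * t2x
      + deriv (fun s => F t s t2) t1 * t1x
      + deriv (fun s => F s t1 t2) t * tx = 0 := by
  intro F t1x t2x
  have d1 : HasDerivAt (fun s => F t t1 s)
      (0 + Real.exp (2 * t1 - t2 - t) * (0 - 1) + Real.exp (t1 - t2) * (0 - 1)) t2 := by
    exact ((hasDerivAt_const t2 (Real.exp (t1 - t))).add
      ((((hasDerivAt_const t2 (2 * t1)).sub (hasDerivAt_id t2)).sub_const t).exp)).add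
      (((hasDerivAt_const t2 t1).sub (hasDerivAt_id t2)).exp)
  have d2 : HasDerivAt (fun s => F t s t2)
      (Real.exp (t1 - t) * 1 + Real.exp (2 * t1 - t2 - t) * (2 * 1)
        + Real.exp (t1 - t2) * 1) t1 := by
    exact ((((hasDerivAt_id t1).sub_const t).exp).add
      (((((hasDerivAt_id t1).const_mul 2).sub_const t2).sub_const t).exp)).add
      (((hasDerivAt_id t1).sub_const t2).exp)
  have d3 : HasDerivAt (fun s => F s t1 t2)
      (Real.exp (t1 - t) * (0 - 1) + Real.exp (2 * t1 - t2 - t) * (0 - 1) + 0) t := by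
    exact ((((hasDerivAt_const t t1).sub (hasDerivAt_id t)).exp).add
      ((((hasDerivAt_const t (2 * t1)).sub_const t2).sub (hasDerivAt_id t)).exp)).add
      (hasDerivAt_const t (Real.exp (t1 - t2)))
  rw [d1.deriv, d2.deriv, d3.deriv]
  show _ * (tx + Real.exp t + 2 * Real.exp t1 + Real.exp t2)
    + _ * (tx + Real.exp t + Real.exp t1) + _ * tx = 0
  have h1 := Real.exp_ne_zero t
  have h2 := Real.exp_ne_zero t2
  rw [show (2:ℝ) * t1 - t2 - t = t1 + t1 - t2 - t by ring]
  simp only [Real.exp_sub, Real.exp_add]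
  field_simp
  ring
end

section
/- A function F(t, t_1, t_2) is an x-integral of the chain t_{1x} = t_x + e^t + e^{t_1} for all values of t_x if and only if it is annihilated by the two vector fields X_1 = ∂_{t_2} + ∂_{t_1} + ∂_t and X_2 = (e^t + 2e^{t_1} + e^{t_2})∂_{t_2} + (e^t + e^{t_1})∂_{t_1}. Moreover these vector fields satisfy [X_1, X_2] = X_2. -/
/-- Partial derivative in the first variable. -/
noncomputable def dd0 (G : ℝ → ℝ → ℝ → ℝ) (t t1 t2 : ℝ) : ℝ :=
  deriv (fun s => G s t1 t2) t

/-- Partial derivative in the second variable. -/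
noncomputable def dd1 (G : ℝ → ℝ → ℝ → ℝ) (t t1 t2 : ℝ) : ℝ :=
  deriv (fun s => G t s t2) t1

/-- Partial derivative in the third variable. -/
noncomputable def dd2 (G : ℝ → ℝ → ℝ → ℝ) (t t1 t2 : ℝ) : ℝ :=
  deriv (fun s => G t t1 s) t2

/-- The vector field `X₁ = ∂_{t₂} + ∂_{t₁} + ∂_t`. -/
noncomputable def Xone (G : ℝ → ℝ → ℝ → ℝ) (t t1 t2 : ℝ) : ℝ :=
  dd2 G t t1 t2 + dd1 G t t1 t2 + dd0 G t t1 t2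

/-- The vector field `X₂ = (e^t + 2e^{t₁} + e^{t₂})∂_{t₂} + (e^t + e^{t₁})∂_{t₁}`. -/
noncomputable def Xtwo (G : ℝ → ℝ → ℝ → ℝ) (t t1 t2 : ℝ) : ℝ :=
  (Real.exp t + 2 * Real.exp t1 + Real.exp t2) * dd2 G t t1 t2
    + (Real.exp t + Real.exp t1) * dd1 G t t1 t2

lemma ddfd0 (G : ℝ × ℝ × ℝ → ℝ) (hG : Differentiable ℝ G) (t t1 t2 : ℝ) :
    dd0 (fun a b c => G (a, b, c)) t t1 t2 = fderiv ℝ G (t, t1, t2) (1, 0, 0) :=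
  ((hG (t, t1, t2)).hasFDerivAt.comp_hasDerivAt_of_eq t
    (HasDerivAt.prodMk (hasDerivAt_id t) (hasDerivAt_const t ((t1, t2) : ℝ × ℝ))) rfl).deriv

lemma ddfd1 (G : ℝ × ℝ × ℝ → ℝ) (hG : Differentiable ℝ G) (t t1 t2 : ℝ) :
    dd1 (fun a b c => G (a, b, c)) t t1 t2 = fderiv ℝ G (t, t1, t2) (0, 1, 0) :=
  ((hG (t, t1, t2)).hasFDerivAt.comp_hasDerivAt_of_eq t1
    (HasDerivAt.prodMk (hasDerivAt_const t1 t) (HasDerivAt.prodMk (hasDerivAt_id t1) (hasDerivAt_const t1 t2))) rfl).deriv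

lemma ddfd2 (G : ℝ × ℝ × ℝ → ℝ) (hG : Differentiable ℝ G) (t t1 t2 : ℝ) :
    dd2 (fun a b c => G (a, b, c)) t t1 t2 = fderiv ℝ G (t, t1, t2) (0, 0, 1) :=
  ((hG (t, t1, t2)).hasFDerivAt.comp_hasDerivAt_of_eq t2
    (HasDerivAt.prodMk (hasDerivAt_const t2 t) (HasDerivAt.prodMk (hasDerivAt_const t2 t1) (hasDerivAt_id t2))) rfl).deriv

lemma comm_aux (f : ℝ × ℝ × ℝ → ℝ) (hf : ContDiff ℝ (⊤ : ℕ∞) f) (t t1 t2 : ℝ) :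
    Xone (Xtwo (fun a b c => f (a, b, c))) t t1 t2
      - Xtwo (Xone (fun a b c => f (a, b, c))) t t1 t2
      = Xtwo (fun a b c => f (a, b, c)) t t1 t2 := by
  have hfd : Differentiable ℝ f := hf.differentiable (by simp)
  have hA : ContDiff ℝ (⊤ : ℕ∞) (fderiv ℝ f) := hf.fderiv_right (by simp)
  have h2 : ∀ x y z : ℝ, dd2 (fun a b c => f (a, b, c)) x y z
      = fderiv ℝ f (x, y, z) (0, 0, 1) := ddfd2 f hfd
  have h1 : ∀ x y z : ℝ, dd1 (fun a b c => f (a, b, c)) x y z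
      = fderiv ℝ f (x, y, z) (0, 1, 0) := ddfd1 f hfd
  have h0 : ∀ x y z : ℝ, dd0 (fun a b c => f (a, b, c)) x y z
      = fderiv ℝ f (x, y, z) (1, 0, 0) := ddfd0 f hfd
  have hXtwoEq : Xtwo (fun a b c => f (a, b, c)) = fun x y z =>
      (Real.exp x + 2 * Real.exp y + Real.exp z) * fderiv ℝ f (x, y, z) (0, 0, 1)
        + (Real.exp x + Real.exp y) * fderiv ℝ f (x, y, z) (0, 1, 0) := by
    funext x y z
    simp only [Xtwo, h2, h1]
  have hXoneEq : Xone (fun a b c => f (a, b, c)) = fun x y z =>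
      fderiv ℝ f (x, y, z) (0, 0, 1) + fderiv ℝ f (x, y, z) (0, 1, 0)
        + fderiv ℝ f (x, y, z) (1, 0, 0) := by
    funext x y z
    simp only [Xone, h2, h1, h0]
  have hgd : ∀ v : ℝ × ℝ × ℝ, HasFDerivAt (fun q => fderiv ℝ f q v)
      ((fderiv ℝ (fderiv ℝ f) (t, t1, t2)).flip v) (t, t1, t2) := fun v => by
    simpa using (((hA.differentiable (by simp)) (t, t1, t2)).hasFDerivAt.clm_apply
      (hasFDerivAt_const v (t, t1, t2)))
  have hc1 : HasDerivAt (fun s : ℝ => ((s, t1, t2) : ℝ × ℝ × ℝ)) ((1, 0, 0) : ℝ × ℝ × ℝ) t :=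
    HasDerivAt.prodMk (hasDerivAt_id t) (hasDerivAt_const t ((t1, t2) : ℝ × ℝ))
  have hc2 : HasDerivAt (fun s : ℝ => ((t, s, t2) : ℝ × ℝ × ℝ)) ((0, 1, 0) : ℝ × ℝ × ℝ) t1 :=
    HasDerivAt.prodMk (hasDerivAt_const t1 t) (HasDerivAt.prodMk (hasDerivAt_id t1) (hasDerivAt_const t1 t2))
  have hc3 : HasDerivAt (fun s : ℝ => ((t, t1, s) : ℝ × ℝ × ℝ)) ((0, 0, 1) : ℝ × ℝ × ℝ) t2 :=
    HasDerivAt.prodMk (hasDerivAt_const t2 t) (HasDerivAt.prodMk (hasDerivAt_const t2 t1) (hasDerivAt_id t2))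
  have L1 : ∀ v : ℝ × ℝ × ℝ, HasDerivAt (fun s => fderiv ℝ f (s, t1, t2) v)
      (fderiv ℝ (fderiv ℝ f) (t, t1, t2) (1, 0, 0) v) t := fun v => by
    exact (hgd v).comp_hasDerivAt_of_eq t hc1 rfl
  have L2 : ∀ v : ℝ × ℝ × ℝ, HasDerivAt (fun s => fderiv ℝ f (t, s, t2) v)
      (fderiv ℝ (fderiv ℝ f) (t, t1, t2) (0, 1, 0) v) t1 := fun v => by
    exact (hgd v).comp_hasDerivAt_of_eq t1 hc2 rfl
  have L3 : ∀ v : ℝ × ℝ × ℝ, HasDerivAt (fun s => fderiv ℝ f (t, t1, s) v)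
      (fderiv ℝ (fderiv ℝ f) (t, t1, t2) (0, 0, 1) v) t2 := fun v => by
    exact (hgd v).comp_hasDerivAt_of_eq t2 hc3 rfl
  -- coefficient one-variable derivatives
  have hA1 : HasDerivAt (fun s : ℝ => Real.exp s + 2 * Real.exp t1 + Real.exp t2)
      (Real.exp t) t := by
    simpa using ((Real.hasDerivAt_exp t).add_const (2 * Real.exp t1)).add_const (Real.exp t2)
  have hB1 : HasDerivAt (fun s : ℝ => Real.exp s + Real.exp t1) (Real.exp t) t :=
    (Real.hasDerivAt_exp t).add_const (Real.exp t1)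
  have hA2 : HasDerivAt (fun s : ℝ => Real.exp t + 2 * Real.exp s + Real.exp t2)
      (2 * Real.exp t1) t1 := by
    simpa using (((Real.hasDerivAt_exp t1).const_mul 2).const_add (Real.exp t)).add_const
      (Real.exp t2)
  have hB2 : HasDerivAt (fun s : ℝ => Real.exp t + Real.exp s) (Real.exp t1) t1 :=
    (Real.hasDerivAt_exp t1).const_add (Real.exp t)
  have hA3 : HasDerivAt (fun s : ℝ => Real.exp t + 2 * Real.exp t1 + Real.exp s)
      (Real.exp t2) t2 := by
    simpa using (Real.hasDerivAt_exp t2).const_add (Real.exp t + 2 * Real.exp t1)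
  have hB3 : HasDerivAt (fun _ : ℝ => Real.exp t + Real.exp t1) (0 : ℝ) t2 :=
    hasDerivAt_const t2 _
  -- dd of the X2-composite
  have d0X2 : dd0 (fun x y z =>
      (Real.exp x + 2 * Real.exp y + Real.exp z) * fderiv ℝ f (x, y, z) (0, 0, 1)
        + (Real.exp x + Real.exp y) * fderiv ℝ f (x, y, z) (0, 1, 0)) t t1 t2
      = (Real.exp t * fderiv ℝ f (t, t1, t2) (0, 0, 1)
          + (Real.exp t + 2 * Real.exp t1 + Real.exp t2)
            * fderiv ℝ (fderiv ℝ f) (t, t1, t2) (1, 0, 0) (0, 0, 1))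
        + (Real.exp t * fderiv ℝ f (t, t1, t2) (0, 1, 0)
          + (Real.exp t + Real.exp t1)
            * fderiv ℝ (fderiv ℝ f) (t, t1, t2) (1, 0, 0) (0, 1, 0)) :=
    ((hA1.mul (L1 (0, 0, 1))).add (hB1.mul (L1 (0, 1, 0)))).deriv
  have d1X2 : dd1 (fun x y z =>
      (Real.exp x + 2 * Real.exp y + Real.exp z) * fderiv ℝ f (x, y, z) (0, 0, 1)
        + (Real.exp x + Real.exp y) * fderiv ℝ f (x, y, z) (0, 1, 0)) t t1 t2
      = (2 * Real.exp t1 * fderiv ℝ f (t, t1, t2) (0, 0, 1)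
          + (Real.exp t + 2 * Real.exp t1 + Real.exp t2)
            * fderiv ℝ (fderiv ℝ f) (t, t1, t2) (0, 1, 0) (0, 0, 1))
        + (Real.exp t1 * fderiv ℝ f (t, t1, t2) (0, 1, 0)
          + (Real.exp t + Real.exp t1)
            * fderiv ℝ (fderiv ℝ f) (t, t1, t2) (0, 1, 0) (0, 1, 0)) :=
    ((hA2.mul (L2 (0, 0, 1))).add (hB2.mul (L2 (0, 1, 0)))).deriv
  have d2X2 : dd2 (fun x y z =>
      (Real.exp x + 2 * Real.exp y + Real.exp z) * fderiv ℝ f (x, y, z) (0, 0, 1)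
        + (Real.exp x + Real.exp y) * fderiv ℝ f (x, y, z) (0, 1, 0)) t t1 t2
      = (Real.exp t2 * fderiv ℝ f (t, t1, t2) (0, 0, 1)
          + (Real.exp t + 2 * Real.exp t1 + Real.exp t2)
            * fderiv ℝ (fderiv ℝ f) (t, t1, t2) (0, 0, 1) (0, 0, 1))
        + (0 * fderiv ℝ f (t, t1, t2) (0, 1, 0)
          + (Real.exp t + Real.exp t1)
            * fderiv ℝ (fderiv ℝ f) (t, t1, t2) (0, 0, 1) (0, 1, 0)) :=
    ((hA3.mul (L3 (0, 0, 1))).add (hB3.mul (L3 (0, 1, 0)))).deriv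
  -- dd of the X1-composite
  have d2X1 : dd2 (fun x y z =>
      fderiv ℝ f (x, y, z) (0, 0, 1) + fderiv ℝ f (x, y, z) (0, 1, 0)
        + fderiv ℝ f (x, y, z) (1, 0, 0)) t t1 t2
      = fderiv ℝ (fderiv ℝ f) (t, t1, t2) (0, 0, 1) (0, 0, 1)
        + fderiv ℝ (fderiv ℝ f) (t, t1, t2) (0, 0, 1) (0, 1, 0)
        + fderiv ℝ (fderiv ℝ f) (t, t1, t2) (0, 0, 1) (1, 0, 0) :=
    (((L3 (0, 0, 1)).add (L3 (0, 1, 0))).add (L3 (1, 0, 0))).deriv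
  have d1X1 : dd1 (fun x y z =>
      fderiv ℝ f (x, y, z) (0, 0, 1) + fderiv ℝ f (x, y, z) (0, 1, 0)
        + fderiv ℝ f (x, y, z) (1, 0, 0)) t t1 t2
      = fderiv ℝ (fderiv ℝ f) (t, t1, t2) (0, 1, 0) (0, 0, 1)
        + fderiv ℝ (fderiv ℝ f) (t, t1, t2) (0, 1, 0) (0, 1, 0)
        + fderiv ℝ (fderiv ℝ f) (t, t1, t2) (0, 1, 0) (1, 0, 0) :=
    (((L2 (0, 0, 1)).add (L2 (0, 1, 0))).add (L2 (1, 0, 0))).deriv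
  have hsym : ∀ v w : ℝ × ℝ × ℝ, fderiv ℝ (fderiv ℝ f) (t, t1, t2) v w
      = fderiv ℝ (fderiv ℝ f) (t, t1, t2) w v := fun v w =>
    (hf.contDiffAt).isSymmSndFDerivAt (by rw [minSmoothness_of_isRCLikeNormedField]; exact WithTop.coe_le_coe.mpr le_top) v w
  simp only [Xone, Xtwo]
  rw [hXtwoEq, hXoneEq, d0X2, d1X2, d2X2, d2X1, d1X1, h2, h1]
  linear_combination
    (Real.exp t + 2 * Real.exp t1 + Real.exp t2) * hsym (1, 0, 0) (0, 0, 1)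
    + (Real.exp t + 2 * Real.exp t1 + Real.exp t2) * hsym (0, 1, 0) (0, 0, 1)
    + (Real.exp t + Real.exp t1) * hsym (1, 0, 0) (0, 1, 0)
    + (Real.exp t + Real.exp t1) * hsym (0, 0, 1) (0, 1, 0)

/-- `F(t,t₁,t₂)` is an `x`-integral of `t_{1x} = t_x + e^t + e^{t₁}`
for all values of `t_x` if and only if `X₁ F = 0` and `X₂ F = 0`; moreover
`[X₁, X₂] = X₂`. -/
theorem stmt_12 (F : ℝ → ℝ → ℝ → ℝ)
    (hF : ContDiff ℝ (⊤ : ℕ∞) (fun p : ℝ × ℝ × ℝ => F p.1 p.2.1 p.2.2)) :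
    ((∀ t t1 t2 tx : ℝ,
        dd2 F t t1 t2 * (tx + Real.exp t + 2 * Real.exp t1 + Real.exp t2)
          + dd1 F t t1 t2 * (tx + Real.exp t + Real.exp t1)
          + dd0 F t t1 t2 * tx = 0)
      ↔ (∀ t t1 t2 : ℝ, Xone F t t1 t2 = 0 ∧ Xtwo F t t1 t2 = 0)) ∧
    (∀ t t1 t2 : ℝ,
      Xone (Xtwo F) t t1 t2 - Xtwo (Xone F) t t1 t2 = Xtwo F t t1 t2) := by
  constructor
  · constructor
    · intro h t t1 t2
      have h0 := h t t1 t2 0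
      have h1 := h t t1 t2 1
      constructor
      · simp only [Xone]
        linear_combination h1 - h0
      · simp only [Xtwo]
        linear_combination h0
    · intro h t t1 t2 tx
      obtain ⟨h1, h2⟩ := h t t1 t2
      simp only [Xone] at h1
      simp only [Xtwo] at h2
      linear_combination tx * h1 + h2
  · exact fun t t1 t2 => comm_aux (fun p => F p.1 p.2.1 p.2.2) hF t t1 t2
end

section
/- The vector field X̃_2 = (1 + e^{τ_1})∂_{τ_1} + (1 + 2e^{τ_1} + e^{τ_2})∂_{τ_2} on ℝ² annihilates the function c̃(τ_1, τ_2) = e^{τ_1}(1 + (e^{τ_1}+1)e^{−τ_2}), i.e. X̃_2 c̃ = 0. -/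
/-! Both terms of `X̃₂ c̃` carry the factor `e^{τ₁}(1 + e^{τ₁})`; what remains is
`(1 + (2e^{τ₁} + 1)e^{-τ₂}) - (1 + 2e^{τ₁} + e^{τ₂})e^{-τ₂} = 0`. -/

open Real

namespace DiscreteLiouville

/-- The `x`-integral `c̃` of the discrete Liouville equation in the coordinates `(τ₁, τ₂)`. -/
noncomputable def xIntegral (u v : ℝ) : ℝ :=
  exp u * (1 + (exp u + 1) * exp (-v))

theorem hasDerivAt_xIntegral_fst (u v : ℝ) :
    HasDerivAt (fun s => xIntegral s v) (exp u * (1 + (2 * exp u + 1) * exp (-v))) u := by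
  have h := (hasDerivAt_exp u).mul
    ((((hasDerivAt_exp u).add_const 1).mul_const (exp (-v))).const_add 1)
  exact h.congr_deriv (by ring)

theorem hasDerivAt_xIntegral_snd (u v : ℝ) :
    HasDerivAt (fun s => xIntegral u s) (-(exp u * (exp u + 1) * exp (-v))) v := by
  have h := (((hasDerivAt_neg v).exp.const_mul (exp u + 1)).const_add 1).const_mul (exp u)
  exact h.congr_deriv (by ring)

theorem vectorField_xIntegral (u v : ℝ) :
    (1 + exp u) * deriv (fun s => xIntegral s v) u
      + (1 + 2 * exp u + exp v) * deriv (fun s => xIntegral u s) v = 0 := by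
  rw [(hasDerivAt_xIntegral_fst u v).deriv, (hasDerivAt_xIntegral_snd u v).deriv, exp_neg]
  field_simp
  ring

end DiscreteLiouville

/-- the vector field
`X̃₂ = (1 + e^{τ₁})∂_{τ₁} + (1 + 2e^{τ₁} + e^{τ₂})∂_{τ₂}` on `ℝ²`
annihilates `c̃(τ₁,τ₂) = e^{τ₁}(1 + (e^{τ₁}+1)e^{-τ₂})`. -/
theorem stmt_14 (τ1 τ2 : ℝ) :
    let c : ℝ → ℝ → ℝ := fun u v =>
      Real.exp u * (1 + (Real.exp u + 1) * Real.exp (-v))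
    (1 + Real.exp τ1) * deriv (fun s => c s τ2) τ1
      + (1 + 2 * Real.exp τ1 + Real.exp τ2) * deriv (fun s => c τ1 s) τ2 = 0 :=
  DiscreteLiouville.vectorField_xIntegral τ1 τ2
end
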